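/- Let A be a simple unital C*-algebra and let x ∈ A₊ be nonzero. Then there exist a positive integer n and elements b₁, …, bₙ ∈ A such that Σⱼ bⱼ x bⱼ* = 1. -/

import Mathlib

/-!
By simplicity the closed two-sided ideal generated by `x` is all of `A`, so some `y = ∑ aⱼ x cⱼ` is within
distance `1` of `1`; then `y + y*` is invertible and positive. Each term is dominated by a single
conjugate of `x`: `aⱼ x cⱼ + cⱼ* x aⱼ* ≤ (aⱼ + cⱼ*) x (aⱼ + cⱼ*)*`, so some finite sum
`p = ∑ dⱼ x dⱼ*` dominates `y + y*` and is therefore invertible and positive too.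
Conjugating by `p^(-1/2)` turns `p` into `1` while keeping the shape `∑ bⱼ x bⱼ*`.
-/

namespace TwoSidedIdeal

variable {R : Type*} [Ring R] [TopologicalSpace R] [IsTopologicalRing R]

def topologicalClosure (I : TwoSidedIdeal R) : TwoSidedIdeal R :=
  .mk' (closure I) (subset_closure I.zero_mem)
    (fun hu hv ↦ map_mem_closure₂ continuous_add hu hv fun _ ha _ hb ↦ I.add_mem ha hb)
    (fun hu ↦ map_mem_closure continuous_neg hu fun _ ha ↦ I.neg_mem ha)
    (fun {r _} hu ↦ map_mem_closure (continuous_const_mul r) hu fun _ ha ↦ I.mul_mem_left r _ ha)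
    (fun {_ r} hu ↦ map_mem_closure (f := (· * r)) (continuous_mul_const r) hu
      fun _ ha ↦ I.mul_mem_right _ r ha)

theorem coe_topologicalClosure (I : TwoSidedIdeal R) :
    (I.topologicalClosure : Set R) = closure I := by
  unfold topologicalClosure
  exact coe_mk' ..

theorem le_topologicalClosure (I : TwoSidedIdeal R) : I ≤ I.topologicalClosure := fun _ h ↦ by
  rw [← SetLike.mem_coe, coe_topologicalClosure]
  exact subset_closure h

theorem isClosed_topologicalClosure (I : TwoSidedIdeal R) :
    IsClosed (I.topologicalClosure : Set R) := by
  rw [coe_topologicalClosure]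
  exact isClosed_closure

theorem one_mem_closure_span_singleton
    (hsimple : ∀ I : TwoSidedIdeal R, IsClosed (I : Set R) → I = ⊥ ∨ I = ⊤) {x : R} (hx : x ≠ 0) :
    (1 : R) ∈ closure (span {x} : Set R) := by
  rw [← coe_topologicalClosure]
  rcases hsimple _ (isClosed_topologicalClosure (span {x})) with h | h
  · have hx' := le_topologicalClosure _ (subset_span rfl : x ∈ span {x})
    rw [h, mem_bot] at hx'
    exact absurd hx' hx
  · rw [h]
    trivial

end TwoSidedIdeal

section ConjugateSums

variable {A : Type*}

def conjugateSums [NonUnitalSemiring A] [Star A] (x : A) : Set A :=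
  {p | ∃ (n : ℕ) (b : Fin n → A), ∑ j, b j * x * star (b j) = p}

variable [NonUnitalSemiring A] [StarRing A] {x p q : A}

theorem zero_mem_conjugateSums : (0 : A) ∈ conjugateSums x :=
  ⟨0, ![], by simp⟩

theorem conjugate_mem_conjugateSums (b : A) : b * x * star b ∈ conjugateSums x :=
  ⟨1, ![b], by simp⟩

theorem add_mem_conjugateSums (hp : p ∈ conjugateSums x) (hq : q ∈ conjugateSums x) :
    p + q ∈ conjugateSums x := by
  obtain ⟨n, b, rfl⟩ := hp
  obtain ⟨m, c, rfl⟩ := hq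
  exact ⟨n + m, Fin.append b c, by simp [Fin.sum_univ_add]⟩

theorem conjugate_mem_conjugateSums_of_mem (b : A) (hp : p ∈ conjugateSums x) :
    b * p * star b ∈ conjugateSums x := by
  obtain ⟨n, c, rfl⟩ := hp
  refine ⟨n, fun j ↦ b * c j, ?_⟩
  simp only [Finset.mul_sum, Finset.sum_mul, star_mul, mul_assoc]

end ConjugateSums

section Domination

variable {A : Type*} [Ring A] [StarRing A] [PartialOrder A] [StarOrderedRing A] {x : A}

theorem add_star_le_conjugate (hx : 0 ≤ x) (a c : A) :
    a * x * c + star (a * x * c) ≤ (a + star c) * x * star (a + star c) := by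
  have key : (a + star c) * x * star (a + star c) =
      a * x * c + star (a * x * c) + (a * x * star a + star c * x * c) := by
    simp only [star_add, star_star, star_mul, IsSelfAdjoint.of_nonneg hx |>.star_eq]
    noncomm_ring
  rw [key]
  exact le_add_of_nonneg_right
    (add_nonneg (star_right_conjugate_nonneg hx a) (star_left_conjugate_nonneg hx c))

theorem exists_mem_conjugateSums_add_star_le (hx : 0 ≤ x) {y : A}
    (hy : y ∈ TwoSidedIdeal.span {x}) : ∃ p ∈ conjugateSums x, y + star y ≤ p := by
  rw [TwoSidedIdeal.mem_span_iff_mem_addSubgroup_closure] at hy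
  induction hy using AddSubgroup.closure_induction'' with
  | mem _ hz =>
    obtain ⟨_, ⟨a, -, _, rfl, rfl⟩, c, -, rfl⟩ := hz
    exact ⟨_, conjugate_mem_conjugateSums _, add_star_le_conjugate hx a c⟩
  | neg_mem _ hz =>
    obtain ⟨_, ⟨a, -, _, rfl, rfl⟩, c, -, rfl⟩ := hz
    refine ⟨_, conjugate_mem_conjugateSums (-a + star c), ?_⟩
    simpa only [neg_mul] using add_star_le_conjugate hx (-a) c
  | zero => exact ⟨0, zero_mem_conjugateSums, by simp⟩
  | add _ _ _ _ hy hz =>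
    obtain ⟨p, hp, hyp⟩ := hy
    obtain ⟨q, hq, hzq⟩ := hz
    refine ⟨p + q, add_mem_conjugateSums hp hq, ?_⟩
    rw [star_add, add_add_add_comm]
    exact add_le_add hyp hzq

end Domination

section CStarAlgebra

variable {A : Type*} [CStarAlgebra A] [PartialOrder A] [StarOrderedRing A]

theorem isStrictlyPositive_add_star_of_norm_one_sub_lt_one {y : A} (hy : ‖1 - y‖ < 1) :
    IsStrictlyPositive (y + star y) := by
  set w := (1 - y) + star (1 - y)
  have hw : ‖w‖ < 2 := calc
    ‖w‖ ≤ ‖1 - y‖ + ‖star (1 - y)‖ := norm_add_le _ _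
    _ < 2 := by rw [norm_star]; linarith
  have hle : algebraMap ℝ A (2 - ‖w‖) ≤ y + star y := by
    have : w ≤ algebraMap ℝ A ‖w‖ := IsSelfAdjoint.le_algebraMap_norm_self (.add_star_self _)
    have h2 : y + star y = algebraMap ℝ A 2 - w := by
      simp only [w, star_sub, star_one]
      rw [map_ofNat, ← one_add_one_eq_two]
      abel
    rw [map_sub, h2]
    exact sub_le_sub_left this _
  exact (isStrictlyPositive_algebraMap (by linarith)).of_le hle

theorem one_mem_conjugateSums_of_isStrictlyPositive {x p : A} (hp : IsStrictlyPositive p)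
    (hpx : p ∈ conjugateSums x) : (1 : A) ∈ conjugateSums x := by
  have h := conjugate_mem_conjugateSums_of_mem (p ^ (-(1 / 2) : ℝ)) hpx
  rwa [(CFC.rpow_nonneg).isSelfAdjoint.star_eq, CFC.conjugate_rpow_neg_one_half p] at h

end CStarAlgebra

/-- Corollary 1.14: in a simple unital C*-algebra, for every nonzero positive `x`
there are `b₁, …, bₙ` with `Σ bⱼ x bⱼ* = 1`. -/
theorem exists_conjugates_sum_eq_one {A : Type*} [CStarAlgebra A]
    [PartialOrder A] [StarOrderedRing A]
    (hsimple : ∀ I : TwoSidedIdeal A, IsClosed (I : Set A) → I = ⊥ ∨ I = ⊤)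
    (x : A) (hx : 0 ≤ x) (hx0 : x ≠ 0) :
    ∃ (n : ℕ) (b : Fin n → A), 0 < n ∧ ∑ j, b j * x * star (b j) = 1 := by
  have : Nontrivial A := nontrivial_of_ne x 0 hx0
  obtain ⟨y, hy, hy1⟩ := Metric.mem_closure_iff.mp
    (TwoSidedIdeal.one_mem_closure_span_singleton hsimple hx0) 1 one_pos
  obtain ⟨p, hpx, hyp⟩ := exists_mem_conjugateSums_add_star_le hx hy
  have hpos : IsStrictlyPositive p :=
    (isStrictlyPositive_add_star_of_norm_one_sub_lt_one (by rwa [← dist_eq_norm])).of_le hyp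
  obtain ⟨n, b, hb⟩ := one_mem_conjugateSums_of_isStrictlyPositive hpos hpx
  refine ⟨n, b, Nat.pos_of_ne_zero ?_, hb⟩
  rintro rfl
  simp at hb
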